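/- Soundness of the executable heap allocation: for every byte list b⃗ and configuration σ, either malloc b⃗ σ ∋ UB, or malloc b⃗ σ ∋ malloc^run b⃗ σ. -/

import Mathlib

/-! Executable memory model (instantiated at the concrete address type ℤ)
and its nondeterministic specification. -/

/-- Pointers: an address tagged with a provenance (`Option ℕ`, `none` is the wildcard). -/
structure PtrZ where
  a : ℤ
  pr : Option ℕ
deriving DecidableEq

/-- Memory configurations: a finite memory map, heap block map, frame stack, and
the set of used provenances. -/
structure ConfZ (SByte : Type) where
  mem : Finmap fun _ : ℤ => SByte × Option ℕ
  heap : Finmap fun _ : ℤ => List PtrZ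
  stack : List (List PtrZ)
  used : Finset ℕ

/-- Possible outcomes of a memory operation. -/
inductive ErrUbOom (A : Type) where
  | UB
  | OOM
  | FAIL
  | ok (a : A)

/-- The (nondeterministic, propositional) specification monad. -/
abbrev MemPropT (SByte X : Type) : Type :=
  ConfZ SByte → Set (ErrUbOom (ConfZ SByte × X))

/-- The (deterministic) executable monad. -/
abbrev MemExec (SByte X : Type) : Type :=
  ConfZ SByte → ErrUbOom (ConfZ SByte × X)

/-- `σ.mem[p] ≐ b`: address `p.a` maps to byte `b` with provenance `p.pr`. -/
def readByteAt {SByte : Type} (σ : ConfZ SByte) (p : PtrZ) (b : SByte) : Prop :=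
  σ.mem.lookup p.a = some (b, p.pr)

/-- A pointer is accessible in memory. -/
def accessible {SByte : Type} (σ : ConfZ SByte) (p : PtrZ) : Prop :=
  ∃ b, readByteAt σ p b

/-- Boolean accessibility check (used by the executable implementations). -/
def accessibleB {SByte : Type} (σ : ConfZ SByte) (p : PtrZ) : Bool :=
  match σ.mem.lookup p.a with
  | some (_, pr) => decide (pr = p.pr)
  | none => false

/-- The two memories agree on content and provenance at all addresses except those
of the pointers in `ps`. -/
def memEqExcept {SByte : Type} (σ1 σ2 : ConfZ SByte) (ps : List PtrZ) : Prop :=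
  ∀ (p' : PtrZ) (b : SByte),
    (∀ p ∈ ps, p'.a ≠ p.a) → (readByteAt σ1 p' b ↔ readByteAt σ2 p' b)


/-- Add a list of freshly allocated pointers to the top frame of the stack. -/
def pushTop (ps : List PtrZ) : List (List PtrZ) → List (List PtrZ)
  | [] => [ps]
  | f :: rest => (ps ++ f) :: rest

/-- Write a list of bytes with provenance `pr` at consecutive addresses starting at `a`. -/
def writeBytes {SByte : Type} (m : Finmap fun _ : ℤ => SByte × Option ℕ) (a : ℤ)
    (pr : Option ℕ) : List SByte → Finmap fun _ : ℤ => SByte × Option ℕ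
  | [] => m
  | b :: bs => writeBytes (m.insert a (b, pr)) (a + 1) pr bs

/-- A fresh provenance, generated by a counter (one past the largest used provenance). -/
def freshProv {SByte : Type} (σ : ConfZ SByte) : ℕ := σ.used.sup id + 1

/-- A free address: one past the largest currently allocated address. -/
def freshAddr {SByte : Type} (σ : ConfZ SByte) : ℤ := WithBot.unbotD 0 σ.mem.keys.max + 1

/-- The pointers of a freshly allocated block of length `n` rooted at `a`. -/
def blockPtrs (a : ℤ) (pr : ℕ) (n : ℕ) : List PtrZ :=
  (List.range n).map fun i => ⟨a + i, some pr⟩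

/-- Specification of heap allocation `malloc b⃗`: choose a fresh provenance `pr` and a
free contiguous range of `|b⃗|` addresses starting at `a`, write the bytes there with
provenance `pr`, map the root address `a` in the heap to the newly allocated pointers,
leave the stack and everything else unchanged, record `pr` as used, and return the
pointer `(a, pr)` (`OOM` is always allowed). -/
def mallocSpec {SByte : Type} (bs : List SByte) : MemPropT SByte PtrZ :=
  fun σ1 =>
    { beh | beh = .OOM
          ∨ ∃ (σ2 : ConfZ SByte) (pr : ℕ) (a : ℤ) (ps : List PtrZ),
              pr ∉ σ1.used ∧
              ps.length = bs.length ∧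
              (∀ i (h : i < ps.length),
                (ps.get ⟨i, h⟩).pr = some pr ∧ (ps.get ⟨i, h⟩).a = a + i ∧
                σ1.mem.lookup (ps.get ⟨i, h⟩).a = none) ∧
              (∀ i (h : i < ps.length) (h' : i < bs.length),
                readByteAt σ2 (ps.get ⟨i, h⟩) (bs.get ⟨i, h'⟩)) ∧
              memEqExcept σ1 σ2 ps ∧
              σ2.stack = σ1.stack ∧
              σ2.heap = σ1.heap.insert a ps ∧
              σ2.used = insert pr σ1.used ∧
              beh = .ok (σ2, ⟨a, some pr⟩) }

/-- Executable heap allocation: deterministically picks the fresh provenance by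
counter and the free contiguous block just past the largest allocated address. -/
def mallocRun {SByte : Type} (bs : List SByte) : MemExec SByte PtrZ :=
  fun σ =>
    let pr := freshProv σ
    let a := freshAddr σ
    .ok ({ mem := writeBytes σ.mem a (some pr) bs,
           heap := σ.heap.insert a (blockPtrs a pr bs.length),
           stack := σ.stack,
           used := insert pr σ.used }, ⟨a, some pr⟩)


lemma writeBytes_lookup_out {SByte : Type} (bs : List SByte)
    (m : Finmap fun _ : ℤ => SByte × Option ℕ) (a : ℤ) (pr : Option ℕ)
    (x : ℤ) (hx : x < a ∨ a + bs.length ≤ x) :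
    (writeBytes m a pr bs).lookup x = m.lookup x := by
  induction bs generalizing m a with
  | nil => rfl
  | cons b bs ih =>
    simp only [List.length_cons] at hx
    show (writeBytes (m.insert a (b, pr)) (a+1) pr bs).lookup x = m.lookup x
    rw [ih (m.insert a (b,pr)) (a+1) (by push_cast at hx ⊢; omega)]
    exact Finmap.lookup_insert_of_ne _ (by push_cast at hx; omega)

lemma writeBytes_lookup_in {SByte : Type} (bs : List SByte)
    (m : Finmap fun _ : ℤ => SByte × Option ℕ) (a : ℤ) (pr : Option ℕ)
    (i : ℕ) (hi : i < bs.length) :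
    (writeBytes m a pr bs).lookup (a + i) = some (bs.get ⟨i, hi⟩, pr) := by
  induction bs generalizing m a i with
  | nil => simp at hi
  | cons b bs ih =>
    cases i with
    | zero =>
      show (writeBytes (m.insert a (b, pr)) (a+1) pr bs).lookup (a + ((0:ℕ):ℤ)) = _
      rw [writeBytes_lookup_out bs _ (a+1) pr _ (by push_cast; omega)]
      rw [show a + ((0:ℕ):ℤ) = a by push_cast; ring, Finmap.lookup_insert]
      rfl
    | succ i =>
      show (writeBytes (m.insert a (b, pr)) (a+1) pr bs).lookup _ = _
      have := ih (m.insert a (b,pr)) (a+1) i (by simpa using Nat.lt_of_succ_lt_succ hi)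
      convert this using 2
      case e'_3 => rfl
      all_goals (push_cast; ring)

lemma lookup_none_of_fresh {SByte : Type} (σ : ConfZ SByte) (x : ℤ)
    (hx : freshAddr σ ≤ x) : σ.mem.lookup x = none := by
  by_contra h
  obtain ⟨v, hv⟩ := Option.ne_none_iff_exists'.mp h
  have hmem : x ∈ σ.mem := Finmap.mem_iff.mpr ⟨v, hv⟩
  have hk : x ∈ σ.mem.keys := Finmap.mem_keys.mpr hmem
  have hle := Finset.le_max hk
  unfold freshAddr at hx
  cases hmax : σ.mem.keys.max with
  | bot => rw [hmax] at hle; exact absurd hle (by simp)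
  | coe m' =>
    rw [hmax] at hle hx
    rw [WithBot.coe_le_coe] at hle
    simp only [WithBot.unbotD_coe] at hx
    omega

lemma blockPtrs_eq (a : ℤ) (pr : ℕ) (n : ℕ) :
    blockPtrs a pr n = (List.range n).map fun i : ℕ => ⟨a + i, some pr⟩ := by
  unfold blockPtrs
  show List.map _ ((List.range n : List ℕ).flatMap fun i : ℕ => [(i : ℤ)]) = _
  rw [List.map_flatMap]
  induction n with
  | zero => simp
  | succ k ih => rw [List.range_succ]; simp_all

lemma blockPtrs_length (a : ℤ) (pr : ℕ) (n : ℕ) : (blockPtrs a pr n).length = n := by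
  rw [blockPtrs_eq, List.length_map, List.length_range]

lemma blockPtrs_get (a : ℤ) (pr : ℕ) (n : ℕ) (i : ℕ) (h : i < (blockPtrs a pr n).length) :
    (blockPtrs a pr n).get ⟨i, h⟩ = ⟨a + i, some pr⟩ := by
  have h' : i < n := by rwa [blockPtrs_length] at h
  simp only [blockPtrs_eq, List.get_eq_getElem, List.getElem_map, List.getElem_range]

lemma mem_blockPtrs (a : ℤ) (pr : ℕ) (n : ℕ) (p : PtrZ) :
    p ∈ blockPtrs a pr n ↔ ∃ i, i < n ∧ p = ⟨a + i, some pr⟩ := by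
  rw [blockPtrs_eq, List.mem_map]
  constructor
  · rintro ⟨i, hi, rfl⟩; exact ⟨i, List.mem_range.mp hi, rfl⟩
  · rintro ⟨i, hi, rfl⟩; exact ⟨i, List.mem_range.mpr hi, rfl⟩


/-- Soundness of the executable heap allocation: for every byte list `b⃗` and
configuration `σ`, either `malloc b⃗ σ ∋ UB`, or `malloc b⃗ σ ∋ malloc^run b⃗ σ`. -/
theorem mallocRun_sound {SByte : Type} (bs : List SByte) (σ : ConfZ SByte) :
    ErrUbOom.UB ∈ mallocSpec bs σ ∨ mallocRun bs σ ∈ mallocSpec bs σ := by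
  right
  unfold mallocRun mallocSpec
  set pr := freshProv σ with hpr
  set a := freshAddr σ with ha
  set n := bs.length with hn
  refine Or.inr ⟨⟨writeBytes σ.mem a (some pr) bs,
      σ.heap.insert a (blockPtrs a pr n), σ.stack, insert pr σ.used⟩,
      pr, a, blockPtrs a pr n,
      ?_, blockPtrs_length a pr n, ?_, ?_, ?_, rfl, rfl, rfl, rfl⟩
  · intro hmem
    have h1 := Finset.le_sup (f := id) hmem
    simp only [id] at h1
    simp only [hpr, freshProv] at h1
    omega
  · intro i h
    rw [blockPtrs_get]
    exact ⟨rfl, rfl, lookup_none_of_fresh σ _ (by show freshAddr σ ≤ a + (i:ℤ); rw [← ha]; omega)⟩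
  · intro i h h'
    unfold readByteAt
    rw [blockPtrs_get]
    exact writeBytes_lookup_in bs σ.mem a (some pr) i h'
  · intro p' b hp
    have hout : p'.a < a ∨ a + (n : ℤ) ≤ p'.a := by
      by_contra hc
      push_neg at hc
      obtain ⟨h1, h2⟩ := hc
      have hi : (p'.a - a).toNat < n := by omega
      have hne := hp ⟨a + (p'.a - a).toNat, some pr⟩
        ((mem_blockPtrs a pr n _).mpr ⟨(p'.a - a).toNat, hi, rfl⟩)
      simp only at hne
      omega
    unfold readByteAt
    show _ ↔ Finmap.lookup p'.a (writeBytes σ.mem a (some pr) bs) = _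
    rw [writeBytes_lookup_out bs σ.mem a (some pr) p'.a hout]
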